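/- Let j be odd, and let x, m, p ⊆ [n]_{j+1} and x̄, m̄, p̄ ⊆ [n]_{j+2} be such that the sets ending in n+1 and those not are disjoint. Then the movement condition (x̄ ∪ x∨) : (m̄ ∪ m∨) ⇝ (p̄ ∪ p∨) holds if and only if the four conditions hold: p = (m ∪ x⁺)\x⁻, m = (p ∪ x⁻)\x⁺, p̄ = (m̄ ∪ x̄⁺)\(x̄⁻ ∪ x), and m̄ = (p̄ ∪ x̄⁻ ∪ x)\x̄⁺. -/

import Mathlib

/-- `Simplex n j` is the set `[n]_j` of order-preserving injections `[j] ↪ [n]`. -/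
abbrev Simplex (n j : ℕ) := Fin (j+1) ↪o Fin (n+1)

/-- The `k`-th face `a ∘ δ_k` of `a ∈ [n]_{j+1}`. -/
def face {n j : ℕ} (a : Simplex n (j+1)) (k : Fin (j+2)) : Simplex n j :=
  (Fin.succAboveOrderEmb k).trans a

/-- The even faces `a⁺` of `a`. -/
def posFaces {n j : ℕ} (a : Simplex n (j+1)) : Set (Simplex n j) :=
  {b | ∃ k : Fin (j+2), Even (k : ℕ) ∧ b = face a k}

/-- The odd faces `a⁻` of `a`. -/
def negFaces {n j : ℕ} (a : Simplex n (j+1)) : Set (Simplex n j) :=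
  {b | ∃ k : Fin (j+2), Odd (k : ℕ) ∧ b = face a k}

def setPos {n j : ℕ} (ξ : Set (Simplex n (j+1))) : Set (Simplex n j) := ⋃ a ∈ ξ, posFaces a
def setNeg {n j : ℕ} (ξ : Set (Simplex n (j+1))) : Set (Simplex n j) := ⋃ a ∈ ξ, negFaces a

/-- The inclusion `[n]_j ⊆ [n+1]_j`. -/
def liftS {n j : ℕ} (a : Simplex n j) : Simplex (n+1) j :=
  a.trans (OrderEmbedding.ofStrictMono Fin.castSucc Fin.strictMono_castSucc)

/-- `a∨ ∈ [n+1]_{j+1}`: append the new top element `n+1` to `a ∈ [n]_j`. -/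
def vee {n j : ℕ} (a : Simplex n j) : Simplex (n+1) (j+1) :=
  OrderEmbedding.ofStrictMono (Fin.snoc (fun i => (a i).castSucc) (Fin.last (n+1))) (by
    intro i k h
    rcases Fin.eq_castSucc_or_eq_last k with ⟨k', rfl⟩ | rfl
    · rcases Fin.eq_castSucc_or_eq_last i with ⟨i', rfl⟩ | rfl
      · simpa only [Fin.snoc_castSucc] using
          Fin.castSucc_lt_castSucc_iff.mpr (a.strictMono (Fin.castSucc_lt_castSucc_iff.mp h))
      · exact absurd (lt_trans h (Fin.castSucc_lt_last k')) (lt_irrefl _)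
    · rcases Fin.eq_castSucc_or_eq_last i with ⟨i', rfl⟩ | rfl
      · simp only [Fin.snoc_castSucc, Fin.snoc_last]
        exact Fin.castSucc_lt_last _
      · exact absurd h (lt_irrefl _))

/-- A subset of `[n]_{j+1}` is well-formed if distinct elements share no even face
and no odd face. -/
def WellFormed {n j : ℕ} (ξ : Set (Simplex n (j+1))) : Prop :=
  ∀ a ∈ ξ, ∀ b ∈ ξ, a ≠ b →
    posFaces a ∩ posFaces b = ∅ ∧ negFaces a ∩ negFaces b = ∅

/-- `ξ` moves `μ` to `π`. -/
def Moves {n j : ℕ} (ξ : Set (Simplex n (j+1))) (μ π : Set (Simplex n j)) : Prop :=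
  π = (μ ∪ setPos ξ) \ setNeg ξ ∧ μ = (π ∪ setNeg ξ) \ setPos ξ

/-! A simplex of `[n+1]_{j+1}` either ends in `n+1`, and is then `a∨` for a unique `a`, or it
does not, and is then the lift of a unique simplex of `[n]_{j+1}`. So an equation between
subsets of `[n+1]_{j+1}` is equivalent to the pair of equations between its preimages under
`liftS` and under `vee`. Faces commute with both maps, except that the last face of `a∨` is
the lift of `a`; its index `j+2` is odd, so `(ξ∨)⁻ = ξ ∪ (ξ⁻)∨` and `(ξ∨)⁺ = (ξ⁺)∨`.
Splitting the two equations of the movement condition this way gives the four conditions. -/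

open Set

theorem Set.eq_iff_preimage_eq_of_range_union_eq_univ {α β γ : Type*}
    {f : α → γ} {g : β → γ} (h : range f ∪ range g = univ) {S T : Set γ} :
    S = T ↔ f ⁻¹' S = f ⁻¹' T ∧ g ⁻¹' S = g ⁻¹' T := by
  refine ⟨fun hST => hST ▸ ⟨rfl, rfl⟩, fun ⟨hf, hg⟩ => ext fun c => ?_⟩
  rcases (h.symm ▸ mem_univ c : c ∈ range f ∪ range g) with ⟨a, rfl⟩ | ⟨b, rfl⟩
  · exact Set.ext_iff.mp hf a
  · exact Set.ext_iff.mp hg b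

section

variable {n j : ℕ}

@[simp] lemma liftS_apply (a : Simplex n j) (i : Fin (j+1)) : liftS a i = (a i).castSucc := rfl

@[simp] lemma vee_castSucc (a : Simplex n j) (i : Fin (j+1)) :
    vee a i.castSucc = (a i).castSucc := by
  simp [vee, OrderEmbedding.ofStrictMono]

@[simp] lemma vee_last (a : Simplex n j) : vee a (Fin.last (j+1)) = Fin.last (n+1) := by
  simp [vee, OrderEmbedding.ofStrictMono]

lemma liftS_injective : Function.Injective (liftS : Simplex n j → Simplex (n+1) j) :=
  fun a b h => DFunLike.ext a b fun i => by simpa using congr($h i)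

lemma vee_injective : Function.Injective (vee : Simplex n j → Simplex (n+1) (j+1)) :=
  fun a b h => DFunLike.ext a b fun i => by simpa using congr($h i.castSucc)

lemma disjoint_range_liftS_range_vee :
    Disjoint (range (liftS : Simplex n (j+1) → _)) (range (vee : Simplex n j → _)) := by
  rw [Set.disjoint_iff_forall_ne]
  rintro _ ⟨a, rfl⟩ _ ⟨b, rfl⟩ h
  have := congr($h (Fin.last _))
  simp only [liftS_apply, vee_last] at this
  exact (Fin.castSucc_lt_last _).ne this

lemma range_liftS_union_range_vee :
    range (liftS : Simplex n (j+1) → _) ∪ range (vee : Simplex n j → _) = univ := by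
  refine eq_univ_of_forall fun b => ?_
  by_cases hb : b (Fin.last _) = Fin.last _
  · have hne (i : Fin (j+1)) : b i.castSucc ≠ Fin.last _ :=
      hb ▸ (b.strictMono (Fin.castSucc_lt_last i)).ne
    refine Or.inr ⟨OrderEmbedding.ofStrictMono (fun i => (b i.castSucc).castPred (hne i))
      fun i k hik => Fin.castPred_lt_castPred_iff.mpr (by simpa using hik),
      DFunLike.ext _ _ fun i => Fin.lastCases ?_ (fun i => ?_) i⟩
    · rw [vee_last, hb]
    · rw [vee_castSucc]
      exact Fin.castSucc_castPred _ (hne i)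
  · have hne (i : Fin (j+2)) : b i ≠ Fin.last _ := fun h =>
      hb (le_antisymm (Fin.le_last _) (h ▸ b.monotone (Fin.le_last i)))
    exact Or.inl ⟨OrderEmbedding.ofStrictMono (fun i => (b i).castPred (hne i))
      fun i k hik => Fin.castPred_lt_castPred_iff.mpr (by simpa using hik),
      DFunLike.ext _ _ fun i => Fin.castSucc_castPred _ (hne i)⟩

lemma preimage_liftS_image_vee (A : Set (Simplex n j)) :
    (liftS : Simplex n (j+1) → _) ⁻¹' (vee '' A) = ∅ :=
  preimage_eq_empty (disjoint_range_liftS_range_vee.mono_right (image_subset_range _ _)).symm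

lemma preimage_vee_image_liftS (A : Set (Simplex n (j+1))) :
    (vee : Simplex n j → _) ⁻¹' (liftS '' A) = ∅ :=
  preimage_eq_empty (disjoint_range_liftS_range_vee.mono_left (image_subset_range _ _))

lemma face_liftS (a : Simplex n (j+1)) (k : Fin (j+2)) :
    face (liftS a) k = liftS (face a k) := rfl

lemma face_vee_castSucc (a : Simplex n (j+1)) (k : Fin (j+2)) :
    face (vee a) k.castSucc = vee (face a k) := by
  refine DFunLike.ext _ _ fun i => Fin.lastCases ?_ (fun i => ?_) i
  · rw [face, RelEmbedding.trans_apply]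
    simp [Fin.succAbove_of_le_castSucc _ _ (Fin.castSucc_le_castSucc_iff.mpr (Fin.le_last k))]
  · simp [face, Fin.castSucc_succAbove_castSucc]

lemma face_vee_last (a : Simplex n (j+1)) : face (vee a) (Fin.last (j+2)) = liftS a :=
  DFunLike.ext _ _ fun i => by simp [face]

lemma posFaces_liftS (a : Simplex n (j+1)) : posFaces (liftS a) = liftS '' posFaces a := by
  ext b
  simp [posFaces, face_liftS, eq_comm]

lemma negFaces_liftS (a : Simplex n (j+1)) : negFaces (liftS a) = liftS '' negFaces a := by
  ext b
  simp [negFaces, face_liftS, eq_comm]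

lemma posFaces_vee (hj : Odd j) (a : Simplex n (j+1)) : posFaces (vee a) = vee '' posFaces a := by
  have hlast : ¬Even (j + 2) := Nat.not_even_iff_odd.mpr (hj.add_even even_two)
  ext b
  simp only [posFaces, mem_ofPred_eq, mem_image]
  rw [Fin.exists_fin_succ']
  simp [face_vee_castSucc, hlast, eq_comm]

lemma negFaces_vee (hj : Odd j) (a : Simplex n (j+1)) :
    negFaces (vee a) = insert (liftS a) (vee '' negFaces a) := by
  have hlast : Odd (j + 2) := hj.add_even even_two
  ext b
  simp only [negFaces, mem_ofPred_eq, mem_image, mem_insert_iff]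
  rw [Fin.exists_fin_succ']
  simp [face_vee_castSucc, face_vee_last, hlast, eq_comm, or_comm]

lemma setPos_union (A B : Set (Simplex n (j+1))) : setPos (A ∪ B) = setPos A ∪ setPos B :=
  biUnion_union A B posFaces

lemma setNeg_union (A B : Set (Simplex n (j+1))) : setNeg (A ∪ B) = setNeg A ∪ setNeg B :=
  biUnion_union A B negFaces

lemma setPos_image_liftS (A : Set (Simplex n (j+1))) : setPos (liftS '' A) = liftS '' setPos A := by
  simp only [setPos, biUnion_image, posFaces_liftS, image_iUnion₂]

lemma setNeg_image_liftS (A : Set (Simplex n (j+1))) : setNeg (liftS '' A) = liftS '' setNeg A := by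
  simp only [setNeg, biUnion_image, negFaces_liftS, image_iUnion₂]

lemma setPos_image_vee (hj : Odd j) (A : Set (Simplex n (j+1))) :
    setPos (vee '' A) = vee '' setPos A := by
  simp only [setPos, biUnion_image, posFaces_vee hj, image_iUnion₂]

lemma setNeg_image_vee (hj : Odd j) (A : Set (Simplex n (j+1))) :
    setNeg (vee '' A) = liftS '' A ∪ vee '' setNeg A := by
  simp only [setNeg, biUnion_image, negFaces_vee hj, insert_eq, iUnion_union_distrib,
    image_iUnion₂, ← image_eq_iUnion]

end

/-- Equivalence of the movement condition for `x̄ ∪ x∨` with the four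
conditions of equation (12) of Buckley–Garner (for `j` odd). -/
theorem movement_equiv (n j : ℕ) (hj : Odd j)
    (x : Set (Simplex n (j+1))) (m p : Set (Simplex n j))
    (xb : Set (Simplex n (j+2))) (mb pb : Set (Simplex n (j+1))) :
    Moves (liftS '' xb ∪ vee '' x) (liftS '' mb ∪ vee '' m) (liftS '' pb ∪ vee '' p) ↔
      (p = (m ∪ setPos x) \ setNeg x ∧
       m = (p ∪ setNeg x) \ setPos x ∧
       pb = (mb ∪ setPos xb) \ (setNeg xb ∪ x) ∧
       mb = (pb ∪ setNeg xb ∪ x) \ setPos xb) := by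
  simp only [Moves, eq_iff_preimage_eq_of_range_union_eq_univ range_liftS_union_range_vee,
    setPos_union, setNeg_union, setPos_image_liftS, setNeg_image_liftS, setPos_image_vee hj,
    setNeg_image_vee hj, preimage_sdiff, preimage_union, liftS_injective.preimage_image,
    vee_injective.preimage_image, preimage_liftS_image_vee, preimage_vee_image_liftS,
    union_empty, empty_union, union_assoc]
  tauto
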